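/- Fix i ≠ j and a non-negative integer n. The operator f ↦ ((z_i + z_j)/(z_i - z_j)) · (f - K_{ij} f) maps both the triangular module P_n (total degree ≤ n) and the rectangular module R_n (degree ≤ n in each variable) into themselves. -/

import Mathlib

/-!
Since `Equiv.swap i j` acts trivially modulo `X i - X j`, we have `f - K_{ij} f = (X i - X j) * q`.
Over a domain, total degree and the degree in each variable are additive under multiplication,
and `X i + X j` has no larger degrees than `X i - X j`. Hence every degree of `(X i + X j) * q`
is bounded by the corresponding degree of `(X i - X j) * q = f - K_{ij} f`, hence by that of `f`.
-/

open MvPolynomial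

namespace MvPolynomial

variable {σ R : Type*}

theorem X_sub_X_dvd_sub_rename_swap [CommRing R] [DecidableEq σ] (i j : σ)
    (p : MvPolynomial σ R) : X i - X j ∣ p - rename (Equiv.swap i j) p := by
  let π := Ideal.Quotient.mkₐ R (Ideal.span {(X i - X j : MvPolynomial σ R)})
  have hπ : π (X i) = π (X j) :=
    Ideal.Quotient.eq.2 (Ideal.mem_span_singleton_self _)
  have hcomp : π.comp (rename (Equiv.swap i j)) = π := by
    refine algHom_ext fun k => ?_
    simp only [AlgHom.comp_apply, rename_X]
    rcases eq_or_ne k i with rfl | hki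
    · simp [hπ]
    rcases eq_or_ne k j with rfl | hkj
    · simp [hπ]
    · rw [Equiv.swap_apply_of_ne_of_ne hki hkj]
  rw [← Ideal.mem_span_singleton, ← Ideal.Quotient.eq]
  exact (AlgHom.congr_fun hcomp p).symm

section Degrees

variable [CommSemiring R]

theorem degreeOf_le_of_support_subset {p q : MvPolynomial σ R} (h : p.support ⊆ q.support)
    (k : σ) : p.degreeOf k ≤ q.degreeOf k :=
  (degreeOf_le_iff).2 fun _ hm => monomial_le_degreeOf k (h hm)

variable [NoZeroDivisors R]

theorem totalDegree_mul_le_of_totalDegree_le {p r : MvPolynomial σ R} (hp : p ≠ 0)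
    (h : r.totalDegree ≤ p.totalDegree) (q : MvPolynomial σ R) :
    (r * q).totalDegree ≤ (p * q).totalDegree := by
  rcases eq_or_ne q 0 with rfl | hq
  · simp
  calc (r * q).totalDegree ≤ r.totalDegree + q.totalDegree := totalDegree_mul r q
    _ ≤ p.totalDegree + q.totalDegree := by gcongr
    _ = (p * q).totalDegree := (totalDegree_mul_of_isDomain hp hq).symm

theorem degreeOf_mul_le_of_degreeOf_le {p r : MvPolynomial σ R} {k : σ} (hp : p ≠ 0)
    (h : r.degreeOf k ≤ p.degreeOf k) (q : MvPolynomial σ R) :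
    (r * q).degreeOf k ≤ (p * q).degreeOf k := by
  rcases eq_or_ne q 0 with rfl | hq
  · simp
  calc (r * q).degreeOf k ≤ r.degreeOf k + q.degreeOf k := degreeOf_mul_le k r q
    _ ≤ p.degreeOf k + q.degreeOf k := by gcongr
    _ = (p * q).degreeOf k := (degreeOf_mul_eq hp hq).symm

end Degrees

section XSubX

variable [CommRing R] [Nontrivial R] {i j : σ}

theorem support_X_add_X_subset_support_X_sub_X (hij : i ≠ j) :
    (X i + X j : MvPolynomial σ R).support ⊆ (X i - X j : MvPolynomial σ R).support := by
  classical
  have hne : Finsupp.single i 1 ≠ Finsupp.single j 1 :=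
    (Finsupp.single_left_injective one_ne_zero).ne hij
  refine support_add.trans (Finset.union_subset ?_ ?_) <;>
    simp [support_X, mem_support_iff, coeff_X, hne, hne.symm]

theorem X_sub_X_ne_zero (hij : i ≠ j) : (X i - X j : MvPolynomial σ R) ≠ 0 :=
  sub_ne_zero.2 ((X_injective (R := R)).ne hij)

end XSubX

end MvPolynomial

theorem Qzero_preserves_modules {F : Type*} [Field F] {N : ℕ}
    (i j : Fin N) (hij : i ≠ j) (n : ℕ) (f : MvPolynomial (Fin N) F) :
    ∃ q : MvPolynomial (Fin N) F,
      f - rename (Equiv.swap i j) f = (X i - X j) * q ∧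
        (f.totalDegree ≤ n → ((X i + X j) * q).totalDegree ≤ n) ∧
        ((∀ k, f.degreeOf k ≤ n) → ∀ k, ((X i + X j) * q).degreeOf k ≤ n) := by
  obtain ⟨q, hq⟩ := X_sub_X_dvd_sub_rename_swap i j f
  have hsupp := support_X_add_X_subset_support_X_sub_X (R := F) hij
  refine ⟨q, hq, fun hf => ?_, fun hf k => ?_⟩
  · calc ((X i + X j) * q).totalDegree ≤ ((X i - X j) * q).totalDegree :=
          totalDegree_mul_le_of_totalDegree_le (X_sub_X_ne_zero hij)
            (totalDegree_le_of_support_subset hsupp) q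
      _ ≤ max f.totalDegree (rename (Equiv.swap i j) f).totalDegree :=
          hq ▸ totalDegree_sub _ _
      _ ≤ n := max_le hf ((totalDegree_rename_le _ f).trans hf)
  · calc ((X i + X j) * q).degreeOf k ≤ ((X i - X j) * q).degreeOf k :=
          degreeOf_mul_le_of_degreeOf_le (X_sub_X_ne_zero hij)
            (degreeOf_le_of_support_subset hsupp k) q
      _ ≤ max (f.degreeOf k) ((rename (Equiv.swap i j) f).degreeOf k) :=
          hq ▸ degreeOf_sub_le k _ _
      _ ≤ n := by
          refine max_le (hf k) ?_
          rw [← Equiv.swap_apply_self i j k,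
            degreeOf_rename_of_injective (Equiv.injective _)]
          exact hf _
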